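/- For the Santa Fe process Q with parameter β ∈ (0,1): Q(X_1^n = x_1^n) = Q(K_1^n = k_1^n)·2^{−card V(k_1^n)} for x_i = (k_i, z_{k_i}), where V(k_1^n) denotes the set of distinct values occurring in the sequence k_1^n; consequently, for every n, the pointwise mutual information satisfies I^Q(n) = card(V(K_{−n+1}^0) ∩ V(K_1^n)) Q-almost surely. -/

import Mathlib

open MeasureTheory ProbabilityTheory Filter ENNReal

noncomputable section

/-- The binary positive logarithm `log⁺ x`: `log(x+1)` for `x ≥ 0` and `0` for `x < 0`. -/
def logPlus (x : ℝ) : ℝ := if 0 ≤ x then Real.logb 2 (x + 1) else 0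

variable {𝕏 : Type*}

/-- The left shift on two-sided sequences. -/
def shift (ω : ℤ → 𝕏) : ℤ → 𝕏 := fun i => ω (i + 1)

/-- The block `X_{-n+1}^0` of a two-sided sequence. -/
def blockNeg (n : ℕ) (ω : ℤ → 𝕏) : Fin n → 𝕏 := fun i => ω (-(n : ℤ) + 1 + (i : ℕ))

/-- The block `X_1^n` of a two-sided sequence. -/
def blockPos (n : ℕ) (ω : ℤ → 𝕏) : Fin n → 𝕏 := fun i => ω (1 + (i : ℕ))

/-- The block `X_{-n+1}^n` of a two-sided sequence. -/
def blockBoth (n : ℕ) (ω : ℤ → 𝕏) : Fin (2 * n) → 𝕏 := fun i => ω (-(n : ℤ) + 1 + (i : ℕ))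

/-- A code assigns nonnegative values to finite strings. -/
def CodeNonneg (P : (n : ℕ) → (Fin n → 𝕏) → ℝ) : Prop := ∀ n x, 0 ≤ P n x

/-- A code satisfies the Kraft inequality `∑_{x_1^n} P(x_1^n) ≤ 1`. -/
def CodeKraft (P : (n : ℕ) → (Fin n → 𝕏) → ℝ) : Prop :=
  ∀ n, 1 ≤ n → ∑' x : Fin n → 𝕏, P n x ≤ 1

/-- The pointwise mutual information
`I^P(n) = -log P(X_{-n+1}^0) - log P(X_1^n) + log P(X_{-n+1}^n)` (binary logarithm). -/
def pmi (P : (n : ℕ) → (Fin n → 𝕏) → ℝ) (n : ℕ) (ω : ℤ → 𝕏) : ℝ :=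
  -Real.logb 2 (P n (blockNeg n ω)) - Real.logb 2 (P n (blockPos n ω))
    + Real.logb 2 (P (2 * n) (blockBoth n ω))

/-- The upper random Hilberg exponent `γ⁺_P = limsup_n log⁺ I^P(n) / log n`. -/
def gammaPlus (P : (n : ℕ) → (Fin n → 𝕏) → ℝ) (ω : ℤ → 𝕏) : ℝ :=
  limsup (fun n : ℕ => logPlus (pmi P n ω) / Real.logb 2 n) atTop

/-- The lower random Hilberg exponent `γ⁻_P = liminf_n log⁺ I^P(n) / log n`. -/
def gammaMinus (P : (n : ℕ) → (Fin n → 𝕏) → ℝ) (ω : ℤ → 𝕏) : ℝ :=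
  liminf (fun n : ℕ => logPlus (pmi P n ω) / Real.logb 2 n) atTop

variable [MeasurableSpace 𝕏]

/-- The upper expected Hilberg exponent `δ⁺_P = limsup_n log⁺ E_Q I^P(n) / log n`. -/
def deltaPlus (Q : Measure (ℤ → 𝕏)) (P : (n : ℕ) → (Fin n → 𝕏) → ℝ) : ℝ :=
  limsup (fun n : ℕ => logPlus (∫ ω, pmi P n ω ∂Q) / Real.logb 2 n) atTop

/-- The lower expected Hilberg exponent `δ⁻_P = liminf_n log⁺ E_Q I^P(n) / log n`. -/
def deltaMinus (Q : Measure (ℤ → 𝕏)) (P : (n : ℕ) → (Fin n → 𝕏) → ℝ) : ℝ :=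
  liminf (fun n : ℕ => logPlus (∫ ω, pmi P n ω ∂Q) / Real.logb 2 n) atTop

/-- The measure `Q` regarded as a code: `Q(x_1^n) = Q(X_1^n = x_1^n)`. -/
def measureCode (Q : Measure (ℤ → 𝕏)) : (n : ℕ) → (Fin n → 𝕏) → ℝ :=
  fun n x => (Q {ω | blockPos n ω = x}).toReal

/-- The upper inverse expected Hilberg exponent
`ζ⁺_P = limsup_n log⁺ [E_Q (I^P(n)+B)⁻¹]⁻¹ / log n`, for a constant `B`. -/
def zetaPlus (Q : Measure (ℤ → 𝕏)) (P : (n : ℕ) → (Fin n → 𝕏) → ℝ) (B : ℝ) : ℝ :=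
  limsup (fun n : ℕ => logPlus ((∫ ω, (pmi P n ω + B)⁻¹ ∂Q)⁻¹) / Real.logb 2 n) atTop

/-- The lower inverse expected Hilberg exponent
`ζ⁻_P = liminf_n log⁺ [E_Q (I^P(n)+B)⁻¹]⁻¹ / log n`, for a constant `B`. -/
def zetaMinus (Q : Measure (ℤ → 𝕏)) (P : (n : ℕ) → (Fin n → 𝕏) → ℝ) (B : ℝ) : ℝ :=
  liminf (fun n : ℕ => logPlus ((∫ ω, (pmi P n ω + B)⁻¹ ∂Q)⁻¹) / Real.logb 2 n) atTop

/-- The parameter `ε_P = limsup_n log⁺ [Var_Q I^P(n) / E_Q I^P(n)] / log n`. -/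
def epsilonExp (Q : Measure (ℤ → 𝕏)) (P : (n : ℕ) → (Fin n → 𝕏) → ℝ) : ℝ :=
  limsup (fun n : ℕ =>
    logPlus (variance (pmi P n) Q / ∫ ω, pmi P n ω ∂Q) / Real.logb 2 n) atTop

/-- `I^P` is nearly nondecreasing: for some `C ≥ 0`,
`I^P(n+m) ≥ I^P(n) - 4 log m - C` pointwise for all `n, m ≥ 1`. -/
def NearlyNondecreasing (P : (n : ℕ) → (Fin n → 𝕏) → ℝ) : Prop :=
  ∃ C : ℝ, 0 ≤ C ∧ ∀ n m : ℕ, 1 ≤ n → 1 ≤ m → ∀ ω : ℤ → 𝕏,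
    pmi P n ω - 4 * Real.logb 2 m - C ≤ pmi P (n + m) ω


/-- The real Riemann zeta function `ζ(s) = ∑_{k ≥ 1} k^{-s}` (as a sum of real powers). -/
def zetaReal (s : ℝ) : ℝ := ∑' k : ℕ, ((k : ℝ) + 1) ^ (-s)

/-- Value types of the combined family of variables `(K_i)_{i∈ℤ}` and `(Z_k)_{k∈ℕ}`. -/
def SFType : ℤ ⊕ ℕ → Type := fun j => match j with
  | Sum.inl _ => ℕ
  | Sum.inr _ => Bool

/-- Measurable-space structures on the value types. -/
def SFTypeMeasurableSpace : ∀ j, MeasurableSpace (SFType j) := fun j => match j with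
  | Sum.inl _ => (inferInstance : MeasurableSpace ℕ)
  | Sum.inr _ => (inferInstance : MeasurableSpace Bool)

/-- The combined family of random variables `(K_i)_{i∈ℤ}` and `(Z_k)_{k∈ℕ}`. -/
def SFFam {Ω' : Type*} (K : ℤ → Ω' → ℕ) (Z : ℕ → Ω' → Bool) :
    ∀ j : ℤ ⊕ ℕ, Ω' → SFType j := fun j => match j with
  | Sum.inl i => K i
  | Sum.inr k => Z k

/-! Given the values `k_1, …, k_n` of the `K_i`, the block `x_1^n` is determined by the independent
fair bits `Z_v`, one for each distinct value `v` of `k_1^n`; hence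
`Q(x_1^n) = ∏ P(K = k_i) · 2^{-card V(k_1^n)}`. Since the `K_i` are identically distributed, the
product terms cancel in `I^Q(n)` (almost surely every `P(K = K_i)` is positive, so the logarithms
are honest), leaving `card V(K_{-n+1}^0) + card V(K_1^n) - card V(K_{-n+1}^n)`, which is the
cardinality of the intersection by inclusion–exclusion. -/

theorem ae_measure_preimage_singleton_ne_zero {Ω α : Type*} [MeasurableSpace Ω]
    [MeasurableSpace α] [Countable α] [MeasurableSingletonClass α] {μ : Measure Ω} {X : Ω → α}
    (hX : Measurable X) :
    ∀ᵐ a ∂μ, μ (X ⁻¹' {X a}) ≠ 0 := by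
  have h : ∀ᵐ x ∂μ.map X, μ.map X {x} ≠ 0 := ae_iff_of_countable.2 fun _ hx => hx
  filter_upwards [ae_of_ae_map hX.aemeasurable h] with a ha
  rwa [Measure.map_apply hX (measurableSet_singleton _)] at ha

section Blocks

variable {α : Type*}

theorem sum_blockBoth {M : Type*} [AddCommMonoid M] (f : α → M) (n : ℕ) (ω : ℤ → α) :
    ∑ i, f (blockBoth n ω i) = ∑ i, f (blockNeg n ω i) + ∑ i, f (blockPos n ω i) := by
  simp only [blockBoth, blockNeg, blockPos]
  rw [Fin.sum_univ_eq_sum_range (fun j => f (ω (-(n : ℤ) + 1 + (j : ℕ)))),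
    Fin.sum_univ_eq_sum_range (fun j => f (ω (-(n : ℤ) + 1 + (j : ℕ)))),
    Fin.sum_univ_eq_sum_range (fun j => f (ω (1 + (j : ℕ)))), two_mul, Finset.sum_range_add]
  congr 1
  refine Finset.sum_congr rfl fun j _ => ?_
  congr 2
  push_cast
  ring

theorem image_blockBoth [DecidableEq α] (n : ℕ) (ω : ℤ → α) :
    Finset.univ.image (blockBoth n ω) =
      Finset.univ.image (blockNeg n ω) ∪ Finset.univ.image (blockPos n ω) := by
  ext x
  simp only [Finset.mem_image, Finset.mem_union, Finset.mem_univ, true_and, blockBoth, blockNeg,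
    blockPos]
  constructor
  · rintro ⟨i, rfl⟩
    by_cases hi : (i : ℕ) < n
    · exact Or.inl ⟨⟨i, hi⟩, rfl⟩
    · refine Or.inr ⟨⟨i - n, by omega⟩, ?_⟩
      push_cast [Nat.cast_sub (not_lt.1 hi)]
      ring_nf
  · rintro (⟨i, rfl⟩ | ⟨i, rfl⟩)
    · exact ⟨⟨i, by omega⟩, rfl⟩
    · refine ⟨⟨n + i, by omega⟩, ?_⟩
      push_cast
      ring_nf

variable [MeasurableSpace α]

theorem measurable_blockNeg (n : ℕ) : Measurable (blockNeg n : (ℤ → α) → Fin n → α) :=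
  measurable_pi_lambda _ fun _ => measurable_pi_apply _

theorem measurable_blockPos (n : ℕ) : Measurable (blockPos n : (ℤ → α) → Fin n → α) :=
  measurable_pi_lambda _ fun _ => measurable_pi_apply _

theorem measurable_blockBoth (n : ℕ) : Measurable (blockBoth n : (ℤ → α) → Fin (2 * n) → α) :=
  measurable_pi_lambda _ fun _ => measurable_pi_apply _

variable [Countable α] [MeasurableSingletonClass α]

theorem measurable_pmi (P : (n : ℕ) → (Fin n → α) → ℝ) (n : ℕ) : Measurable (pmi P n) := by
  have hlog (m : ℕ) : Measurable fun x : Fin m → α => Real.logb 2 (P m x) :=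
    measurable_of_countable _
  exact (((hlog n).comp (measurable_blockNeg n)).neg.sub
    ((hlog n).comp (measurable_blockPos n))).add ((hlog (2 * n)).comp (measurable_blockBoth n))

theorem measurable_card_inter_image_blockNeg_blockPos {β : Type*} [DecidableEq β] (f : α → β)
    (n : ℕ) :
    Measurable fun ω : ℤ → α => (((Finset.univ.image fun i => f (blockNeg n ω i)) ∩
      Finset.univ.image fun i => f (blockPos n ω i)).card : ℝ) := by
  have h : Measurable fun p : (Fin n → α) × (Fin n → α) =>
      (((Finset.univ.image fun i => f (p.1 i)) ∩ Finset.univ.image fun i => f (p.2 i)).card : ℝ) :=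
    measurable_of_countable _
  simpa only [Function.comp_def] using
    h.comp ((measurable_blockNeg n).prodMk (measurable_blockPos n))

end Blocks

namespace SantaFe

variable {Ω : Type*} {K : ℤ → Ω → ℕ} {Z : ℕ → Ω → Bool}

def sample (K : ℤ → Ω → ℕ) (Z : ℕ → Ω → Bool) (a : Ω) : ℤ → ℕ × Bool :=
  fun i => (K i a, Z (K i a) a)

theorem injective_one_add {n : ℕ} : Function.Injective fun i : Fin n => (1 + (i : ℕ) : ℤ) :=
  fun _ _ h => Fin.ext (by simpa using h)

theorem sample_preimage_blockPos (n : ℕ) (κ : Fin n → ℕ) (z : ℕ → Bool) :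
    sample K Z ⁻¹' {ω | blockPos n ω = fun i => (κ i, z (κ i))} =
      (⋂ i : Fin n, {a | K (1 + (i : ℕ)) a = κ i}) ∩
        ⋂ v : Finset.univ.image κ, {a | Z v a = z v} := by
  ext a
  simp only [Set.mem_preimage, Set.mem_ofPred_eq, blockPos, sample, funext_iff, Prod.ext_iff,
    Set.mem_inter_iff, Set.mem_iInter, Subtype.forall, Finset.mem_image, Finset.mem_univ,
    true_and, forall_exists_index, forall_apply_eq_imp_iff]
  constructor
  · intro h
    exact ⟨fun i => (h i).1, fun i => (h i).1 ▸ (h i).2⟩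
  · rintro ⟨hK, hZ⟩ i
    exact ⟨hK i, (hK i).symm ▸ hZ i⟩

variable [MeasurableSpace Ω] {μ : Measure Ω}

theorem measurable_sample (hKm : ∀ i, Measurable (K i)) (hZm : ∀ k, Measurable (Z k)) :
    Measurable (sample K Z) := by
  have hZ : Measurable fun p : Ω × ℕ => Z p.2 p.1 := measurable_from_prod_countable_left hZm
  exact measurable_pi_lambda _ fun i => (hKm i).prodMk (hZ.comp (measurable_id.prodMk (hKm i)))

theorem measure_iInter_K_inter_iInter_Z
    (hIndep : iIndepFun (m := SFTypeMeasurableSpace) (SFFam K Z) μ)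
    {ι κ : Type*} [Fintype ι] [Fintype κ] {e : ι → ℤ} (he : e.Injective) {w : κ → ℕ}
    (hw : w.Injective) (k : ι → ℕ) (z : κ → Bool) :
    μ ((⋂ i, {a | K (e i) a = k i}) ∩ ⋂ j, {a | Z (w j) a = z j}) =
      (∏ i, μ {a | K (e i) a = k i}) * ∏ j, μ {a | Z (w j) a = z j} := by
  have := (hIndep.precomp (Sum.map_injective.2 ⟨he, hw⟩)).meas_iInter
    (s := Sum.elim (fun i => {a | K (e i) a = k i}) (fun j => {a | Z (w j) a = z j})) ?_
  · simpa [Set.iInter_sum, Fintype.prod_sum_type] using this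
  · rintro (i | j)
    · exact ⟨{k i}, trivial, rfl⟩
    · exact ⟨{z j}, trivial, rfl⟩

theorem measure_K_block (hIndep : iIndepFun (m := SFTypeMeasurableSpace) (SFFam K Z) μ)
    (n : ℕ) (κ : Fin n → ℕ) :
    μ {a | ∀ i : Fin n, K (1 + (i : ℕ)) a = κ i} =
      ∏ i : Fin n, μ {a | K (1 + (i : ℕ)) a = κ i} := by
  have := measure_iInter_K_inter_iInter_Z hIndep injective_one_add
    (Function.injective_of_subsingleton (Empty.elim : Empty → ℕ)) κ Empty.elim
  simpa [Set.ofPred_forall] using this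

theorem measure_Z_eq [IsProbabilityMeasure μ] (hZm : ∀ k, Measurable (Z k))
    (hZ : ∀ k : ℕ, μ {a | Z k a = true} = 1 / 2) (v : ℕ) (b : Bool) :
    μ {a | Z v a = b} = 2⁻¹ := by
  cases b
  · have hcompl : {a | Z v a = false} = {a | Z v a = true}ᶜ := by ext; simp
    rw [hcompl, prob_compl_eq_one_sub (measurableSet_eq_fun (hZm v) measurable_const), hZ,
      one_div, ENNReal.one_sub_inv_two]
  · rw [hZ, one_div]

variable [IsProbabilityMeasure μ] (hKm : ∀ i, Measurable (K i)) (hZm : ∀ k, Measurable (Z k))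
  (hIndep : iIndepFun (m := SFTypeMeasurableSpace) (SFFam K Z) μ)
  (hZ : ∀ k : ℕ, μ {a | Z k a = true} = 1 / 2)
include hKm hZm hIndep hZ

theorem map_sample_blockPos (n : ℕ) (κ : Fin n → ℕ) (z : ℕ → Bool) :
    μ.map (sample K Z) {ω | blockPos n ω = fun i => (κ i, z (κ i))} =
      (∏ i : Fin n, μ {a | K (1 + (i : ℕ)) a = κ i}) * 2⁻¹ ^ (Finset.univ.image κ).card := by
  have hmeas : MeasurableSet {ω : ℤ → ℕ × Bool | blockPos n ω = fun i => (κ i, z (κ i))} :=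
    measurable_blockPos n (measurableSet_singleton _)
  rw [Measure.map_apply (measurable_sample hKm hZm) hmeas, sample_preimage_blockPos,
    measure_iInter_K_inter_iInter_Z hIndep injective_one_add Subtype.val_injective]
  simp [measure_Z_eq hZm hZ]

variable {L : ℕ → ℝ≥0∞} (hL : ∀ i m, μ {a | K i a = m} = L m)
include hL

theorem logb_measureCode_map_sample (n : ℕ) (κ : Fin n → ℕ) (hκ : ∀ i, L (κ i) ≠ 0)
    (z : ℕ → Bool) :
    Real.logb 2 (measureCode (μ.map (sample K Z)) n fun i => (κ i, z (κ i))) =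
      ∑ i, Real.logb 2 (L (κ i)).toReal - (Finset.univ.image κ).card := by
  have hpos (i : Fin n) : 0 < (L (κ i)).toReal :=
    ENNReal.toReal_pos (hκ i) (hL 0 (κ i) ▸ measure_ne_top μ _)
  rw [measureCode, map_sample_blockPos hKm hZm hIndep hZ, ENNReal.toReal_mul,
    ENNReal.toReal_prod, ENNReal.toReal_pow, ENNReal.toReal_inv, ENNReal.toReal_ofNat]
  simp only [hL]
  rw [Real.logb_mul (Finset.prod_pos fun i _ => hpos i).ne' (by positivity),
    Real.logb_prod _ _ fun i _ => (hpos i).ne', Real.logb_pow, Real.logb_inv,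
    Real.logb_self_eq_one one_lt_two]
  ring

theorem pmi_measureCode_map_sample (n : ℕ) (a : Ω) (ha : ∀ j, L (K j a) ≠ 0) :
    pmi (measureCode (μ.map (sample K Z))) n (sample K Z a) =
      ((Finset.univ.image fun i : Fin n => (blockNeg n (sample K Z a) i).1) ∩
        (Finset.univ.image fun i : Fin n => (blockPos n (sample K Z a) i).1)).card := by
  set k : ℤ → ℕ := fun j => K j a
  have hlogb (m : ℕ) (κ : Fin m → ℕ) (hκ : ∀ i, L (κ i) ≠ 0) :=
    logb_measureCode_map_sample hKm hZm hIndep hZ hL m κ hκ fun v => Z v a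
  have hNeg := hlogb n (blockNeg n k) fun _ => ha _
  have hPos := hlogb n (blockPos n k) fun _ => ha _
  have hBoth := hlogb (2 * n) (blockBoth n k) fun _ => ha _
  rw [sum_blockBoth fun m => Real.logb 2 (L m).toReal] at hBoth
  have hcard : ((Finset.univ.image (blockNeg n k) ∩ Finset.univ.image (blockPos n k)).card : ℝ) +
      (Finset.univ.image (blockBoth n k)).card =
      (Finset.univ.image (blockNeg n k)).card + (Finset.univ.image (blockPos n k)).card := by
    rw [image_blockBoth]
    exact_mod_cast Finset.card_inter_add_card_union _ _
  change -Real.logb 2 (measureCode _ n fun i => (blockNeg n k i, Z (blockNeg n k i) a))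
    - Real.logb 2 (measureCode _ n fun i => (blockPos n k i, Z (blockPos n k i) a))
    + Real.logb 2 (measureCode _ (2 * n) fun i => (blockBoth n k i, Z (blockBoth n k i) a)) =
      ((Finset.univ.image (blockNeg n k) ∩ Finset.univ.image (blockPos n k)).card : ℝ)
  rw [hNeg, hPos, hBoth]
  linarith

theorem ae_pmi_measureCode_map_sample (n : ℕ) :
    ∀ᵐ ω ∂μ.map (sample K Z), pmi (measureCode (μ.map (sample K Z))) n ω =
      ((Finset.univ.image fun i : Fin n => (blockNeg n ω i).1) ∩
        (Finset.univ.image fun i : Fin n => (blockPos n ω i).1)).card := by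
  have hmeas := measurableSet_eq_fun (measurable_pmi (measureCode (μ.map (sample K Z))) n)
    (measurable_card_inter_image_blockNeg_blockPos Prod.fst n)
  refine (ae_map_iff (measurable_sample hKm hZm).aemeasurable hmeas).2 ?_
  filter_upwards [ae_all_iff.2 fun j => ae_measure_preimage_singleton_ne_zero (μ := μ) (hKm j)]
    with a ha
  exact pmi_measureCode_map_sample hKm hZm hIndep hZ hL n a fun j => hL j _ ▸ ha j

end SantaFe

theorem santaFe_mutual_information_general {Ω' : Type*} [MeasurableSpace Ω'] (μ : Measure Ω')
    [IsProbabilityMeasure μ] (β : ℝ)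
    (K : ℤ → Ω' → ℕ) (Z : ℕ → Ω' → Bool)
    (hKm : ∀ i, Measurable (K i)) (hZm : ∀ k, Measurable (Z k))
    (hIndep : iIndepFun (m := SFTypeMeasurableSpace) (SFFam K Z) μ)
    (hK0 : ∀ i : ℤ, μ {a | K i a = 0} = 0)
    (hK : ∀ (i : ℤ) (k : ℕ), 1 ≤ k →
      μ {a | K i a = k} = ENNReal.ofReal ((k : ℝ) ^ (-β⁻¹) / zetaReal β⁻¹))
    (hZ : ∀ k : ℕ, μ {a | Z k a = true} = 1 / 2)
    (Q : Measure (ℤ → ℕ × Bool))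
    (hQ : Q = μ.map (fun a => fun i : ℤ => (K i a, Z (K i a) a))) :
    (∀ n : ℕ, 1 ≤ n → ∀ (k : Fin n → ℕ) (z : ℕ → Bool),
      Q {ω | blockPos n ω = fun i => (k i, z (k i))} =
        μ {a | ∀ i : Fin n, K (1 + (i : ℕ)) a = k i} *
          (2⁻¹ : ℝ≥0∞) ^ (Finset.univ.image k).card) ∧
    (∀ n : ℕ, 1 ≤ n → ∀ᵐ ω ∂Q,
      pmi (measureCode Q) n ω =
        ((Finset.univ.image fun i : Fin n => (blockNeg n ω i).1) ∩
          (Finset.univ.image fun i : Fin n => (blockPos n ω i).1)).card) := by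
  change Q = μ.map (SantaFe.sample K Z) at hQ
  subst hQ
  have hlaw (i : ℤ) (m : ℕ) : μ {a | K i a = m} = μ {a | K 0 a = m} := by
    rcases Nat.eq_zero_or_pos m with rfl | hm
    · rw [hK0, hK0]
    · rw [hK i m hm, hK 0 m hm]
  refine ⟨fun n _ k z => ?_, fun n _ => ?_⟩
  · rw [SantaFe.map_sample_blockPos hKm hZm hIndep hZ, SantaFe.measure_K_block hIndep]
  · exact SantaFe.ae_pmi_measureCode_map_sample hKm hZm hIndep hZ hlaw n

/-- For the Santa Fe process `Q` with parameter `β ∈ (0,1)`: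
`Q(X_1^n = x_1^n) = Q(K_1^n = k_1^n) · 2^{-card V(k_1^n)}` for `x_i = (k_i, z_{k_i})`,
where `V(k_1^n)` is the set of distinct values in `k_1^n`; consequently
`I^Q(n) = card (V(K_{-n+1}^0) ∩ V(K_1^n))` `Q`-almost surely. -/
theorem santaFe_mutual_information {Ω' : Type*} [MeasurableSpace Ω'] (μ : Measure Ω')
    [IsProbabilityMeasure μ] (β : ℝ) (hβ : β ∈ Set.Ioo (0 : ℝ) 1)
    (K : ℤ → Ω' → ℕ) (Z : ℕ → Ω' → Bool)
    (hKm : ∀ i, Measurable (K i)) (hZm : ∀ k, Measurable (Z k))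
    (hIndep : iIndepFun (m := SFTypeMeasurableSpace) (SFFam K Z) μ)
    (hK0 : ∀ i : ℤ, μ {a | K i a = 0} = 0)
    (hK : ∀ (i : ℤ) (k : ℕ), 1 ≤ k →
      μ {a | K i a = k} = ENNReal.ofReal ((k : ℝ) ^ (-β⁻¹) / zetaReal β⁻¹))
    (hZ : ∀ k : ℕ, μ {a | Z k a = true} = 1 / 2)
    (Q : Measure (ℤ → ℕ × Bool))
    (hQ : Q = μ.map (fun a => fun i : ℤ => (K i a, Z (K i a) a))) :
    (∀ n : ℕ, 1 ≤ n → ∀ (k : Fin n → ℕ) (z : ℕ → Bool),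
      Q {ω | blockPos n ω = fun i => (k i, z (k i))} =
        μ {a | ∀ i : Fin n, K (1 + (i : ℕ)) a = k i} *
          (2⁻¹ : ℝ≥0∞) ^ (Finset.univ.image k).card) ∧
    (∀ n : ℕ, 1 ≤ n → ∀ᵐ ω ∂Q,
      pmi (measureCode Q) n ω =
        ((Finset.univ.image fun i : Fin n => (blockNeg n ω i).1) ∩
          (Finset.univ.image fun i : Fin n => (blockPos n ω i).1)).card) :=
  santaFe_mutual_information_general μ β K Z hKm hZm hIndep hK0 hK hZ Q hQ
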